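/- arXiv:2403.01478 — 2 statements merged into one kernel-verified Lean document; each statement's English description precedes it below -/
import Mathlib

section
/- Suppose Q₁,…,Q_N ∈ S₊ⁿ all belong to C*[k−1] = {Q : ∃ β₁,…,β_N ∈ [0,1], Σ βₗ ≤ 1, 0 ⪯ Q ⪯ Σₗ βₗ Pₗ[k−1]⁻¹}, and suppose the inputs satisfy Pₗ[k−1]⁻¹ ⪯ θ̄·Pₗ[k]⁻¹ for all ℓ and some θ̄ ≥ 1. Then for any index i, any subset 𝒩ᵢ of indices containing i, and any coefficients λ_P, (λⱼ)_{j∈𝒩ᵢ} in [0,1] with λ_P + Σ_{j∈𝒩ᵢ} λⱼ ≤ 1, every Q with 0 ⪯ Q ⪯ λ_P Pᵢ[k]⁻¹ + (1/θ̄) Σ_{j∈𝒩ᵢ} λⱼ Qⱼ belongs to C*[k] = {Q : ∃ λ₁,…,λ_N ∈ [0,1], Σ λₗ ≤ 1, 0 ⪯ Q ⪯ Σₗ λₗ Pₗ[k]⁻¹}. -/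
/-! The drift bound `Bₗ ≤ θ Aₗ` turns `Q ≤ ∑ βₗ Bₗ` into `θ⁻¹ Q ≤ ∑ βₗ Aₗ` with the same weights.
So every `θ⁻¹ Qⱼ`, and trivially `Pᵢ[k]⁻¹`, lies in the set of matrices dominated by a
subconvex combination of the `Pₗ[k]⁻¹`; that set is closed under subconvex combinations
(compose the weights) and downward closed, which gives the claim. -/

open Finset
open scoped MatrixOrder

section FeasibleSet

variable (𝕜 : Type*) {ι M : Type*} [Field 𝕜] [LinearOrder 𝕜] [Fintype ι]
  [AddCommGroup M] [PartialOrder M] [Module 𝕜 M]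

/-- The paper's `C*[k]` is `{Q | 0 ≤ Q} ∩ feasibleSet (fun ℓ ↦ (P ℓ)⁻¹)` for `P ℓ = Pₗ[k]`. -/
def feasibleSet (A : ι → M) : Set M :=
  {Q | ∃ β : ι → 𝕜, (∀ ℓ, β ℓ ∈ Set.Icc 0 1) ∧ ∑ ℓ, β ℓ ≤ 1 ∧ Q ≤ ∑ ℓ, β ℓ • A ℓ}

variable {𝕜} {A B : ι → M} {Q R : M}

lemma mem_feasibleSet_of_nonneg [IsStrictOrderedRing 𝕜] {β : ι → 𝕜} (hβ : ∀ ℓ, 0 ≤ β ℓ)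
    (hβsum : ∑ ℓ, β ℓ ≤ 1) (hQ : Q ≤ ∑ ℓ, β ℓ • A ℓ) : Q ∈ feasibleSet 𝕜 A :=
  ⟨β, fun ℓ ↦ ⟨hβ ℓ, (single_le_sum (fun k _ ↦ hβ k) (mem_univ ℓ)).trans hβsum⟩, hβsum, hQ⟩

lemma mem_feasibleSet_of_le (hQR : Q ≤ R) (hR : R ∈ feasibleSet 𝕜 A) : Q ∈ feasibleSet 𝕜 A :=
  let ⟨β, hβ, hβsum, hRβ⟩ := hR
  ⟨β, hβ, hβsum, hQR.trans hRβ⟩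

lemma apply_mem_feasibleSet [IsStrictOrderedRing 𝕜] [DecidableEq ι] (i : ι) :
    A i ∈ feasibleSet 𝕜 A :=
  ⟨Pi.single i 1, fun ℓ ↦ by by_cases h : ℓ = i <;> simp [h], by simp, by simp [Pi.single_apply]⟩

variable [IsStrictOrderedRing 𝕜] [IsOrderedAddMonoid M] [PosSMulMono 𝕜 M]

lemma sum_smul_mem_feasibleSet {κ : Type*} {s : Finset κ} {c : κ → 𝕜} {R : κ → M}
    (hc : ∀ j ∈ s, 0 ≤ c j) (hcsum : ∑ j ∈ s, c j ≤ 1)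
    (hR : ∀ j ∈ s, R j ∈ feasibleSet 𝕜 A) :
    ∑ j ∈ s, c j • R j ∈ feasibleSet 𝕜 A := by
  classical
  choose! β hβ hβsum hRβ using hR
  refine mem_feasibleSet_of_nonneg (β := fun ℓ ↦ ∑ j ∈ s, c j * β j ℓ)
    (fun ℓ ↦ sum_nonneg fun j hj ↦ mul_nonneg (hc j hj) (hβ j hj ℓ).1) ?_ ?_
  · calc ∑ ℓ, ∑ j ∈ s, c j * β j ℓ = ∑ j ∈ s, c j * ∑ ℓ, β j ℓ := by
          rw [sum_comm]; simp only [mul_sum]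
      _ ≤ ∑ j ∈ s, c j := sum_le_sum fun j hj ↦ mul_le_of_le_one_right (hc j hj) (hβsum j hj)
      _ ≤ 1 := hcsum
  · calc ∑ j ∈ s, c j • R j ≤ ∑ j ∈ s, c j • ∑ ℓ, β j ℓ • A ℓ :=
          sum_le_sum fun j hj ↦ smul_le_smul_of_nonneg_left (hRβ j hj) (hc j hj)
      _ = ∑ ℓ, (∑ j ∈ s, c j * β j ℓ) • A ℓ := by
          simp only [smul_sum, smul_smul, sum_smul]; exact sum_comm

lemma smul_add_sum_smul_mem_feasibleSet {κ : Type*} {s : Finset κ} {a : 𝕜} {c : κ → 𝕜} {x : M}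
    {R : κ → M} (ha : 0 ≤ a) (hc : ∀ j ∈ s, 0 ≤ c j) (hsum : a + ∑ j ∈ s, c j ≤ 1)
    (hx : x ∈ feasibleSet 𝕜 A) (hR : ∀ j ∈ s, R j ∈ feasibleSet 𝕜 A) :
    a • x + ∑ j ∈ s, c j • R j ∈ feasibleSet 𝕜 A := by
  simpa using sum_smul_mem_feasibleSet (s := insertNone s) (c := fun o ↦ o.elim a c)
    (R := fun o ↦ o.elim x R) (by rintro (_ | j) hj; exacts [ha, hc j (by simpa using hj)])
    (by simpa using hsum) (by rintro (_ | j) hj; exacts [hx, hR j (by simpa using hj)])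

lemma inv_smul_mem_feasibleSet {θ : 𝕜} (hθ : 0 < θ) (hBA : ∀ ℓ, B ℓ ≤ θ • A ℓ)
    (hR : R ∈ feasibleSet 𝕜 B) : θ⁻¹ • R ∈ feasibleSet 𝕜 A := by
  obtain ⟨β, hβ, hβsum, hRβ⟩ := hR
  refine ⟨β, hβ, hβsum, ?_⟩
  calc θ⁻¹ • R ≤ θ⁻¹ • ∑ ℓ, β ℓ • B ℓ := smul_le_smul_of_nonneg_left hRβ (by positivity)
    _ ≤ θ⁻¹ • ∑ ℓ, β ℓ • θ • A ℓ := by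
        gcongr with ℓ
        exacts [(hβ ℓ).1, hBA ℓ]
    _ = ∑ ℓ, β ℓ • A ℓ := by
        simp only [smul_comm (β _) θ, ← smul_sum, inv_smul_smul₀ hθ.ne']

end FeasibleSet

theorem stmt6_general {n N : ℕ} (Pold Pnew : Fin N → Matrix (Fin n) (Fin n) ℝ)
    (θ : ℝ) (hθ : 1 ≤ θ)
    (hdrift : ∀ ℓ, (θ • (Pnew ℓ)⁻¹ - (Pold ℓ)⁻¹).PosSemidef)
    (Q : Fin N → Matrix (Fin n) (Fin n) ℝ)
    (hQ : ∀ j, (Q j).PosSemidef ∧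
      ∃ β : Fin N → ℝ, (∀ ℓ, β ℓ ∈ Set.Icc (0 : ℝ) 1) ∧ (∑ ℓ, β ℓ) ≤ 1 ∧
        ((∑ ℓ, β ℓ • (Pold ℓ)⁻¹) - Q j).PosSemidef)
    (i : Fin N) (𝒩 : Finset (Fin N))
    (lP : ℝ) (l : Fin N → ℝ)
    (hlP : lP ∈ Set.Icc (0 : ℝ) 1) (hl : ∀ j ∈ 𝒩, l j ∈ Set.Icc (0 : ℝ) 1)
    (hsum : lP + ∑ j ∈ 𝒩, l j ≤ 1)
    (Q' : Matrix (Fin n) (Fin n) ℝ) (hQ'psd : Q'.PosSemidef)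
    (hQ'le : ((lP • (Pnew i)⁻¹ + θ⁻¹ • ∑ j ∈ 𝒩, l j • Q j) - Q').PosSemidef) :
    Q'.PosSemidef ∧
      ∃ μ : Fin N → ℝ, (∀ ℓ, μ ℓ ∈ Set.Icc (0 : ℝ) 1) ∧ (∑ ℓ, μ ℓ) ≤ 1 ∧
        ((∑ ℓ, μ ℓ • (Pnew ℓ)⁻¹) - Q').PosSemidef := by
  have hQnew : ∀ j, θ⁻¹ • Q j ∈ feasibleSet ℝ fun ℓ ↦ (Pnew ℓ)⁻¹ := fun j ↦
    inv_smul_mem_feasibleSet (by linarith) hdrift (hQ j).2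
  have hbound : lP • (Pnew i)⁻¹ + ∑ j ∈ 𝒩, l j • θ⁻¹ • Q j ∈ feasibleSet ℝ fun ℓ ↦ (Pnew ℓ)⁻¹ :=
    smul_add_sum_smul_mem_feasibleSet hlP.1 (fun j hj ↦ (hl j hj).1) hsum
      (apply_mem_feasibleSet i) fun j _ ↦ hQnew j
  simp_rw [smul_comm (l _) θ⁻¹, ← smul_sum] at hbound
  exact ⟨hQ'psd, mem_feasibleSet_of_le hQ'le hbound⟩

/-- robustness inductive step. If `Q₁,…,Q_N` all belong to the global
feasible set at time `k−1` (built from the `Pold ℓ = Pₗ[k−1]`), and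
`Pₗ[k−1]⁻¹ ⪯ θ̄ Pₗ[k]⁻¹` for all `ℓ` with `θ̄ ≥ 1`, then for any node `i`, any neighbor
set `𝒩ᵢ ∋ i` and coefficients `λ_P, λⱼ ∈ [0,1]` with `λ_P + Σ_{j∈𝒩ᵢ} λⱼ ≤ 1`, every
`Q` with `0 ⪯ Q ⪯ λ_P Pᵢ[k]⁻¹ + (1/θ̄) Σ_{j∈𝒩ᵢ} λⱼ Qⱼ` belongs to the global feasible
set at time `k` (built from `Pnew ℓ = Pₗ[k]`). -/
theorem stmt6 {n N : ℕ} (Pold Pnew : Fin N → Matrix (Fin n) (Fin n) ℝ)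
    (hPold : ∀ ℓ, (Pold ℓ).PosDef) (hPnew : ∀ ℓ, (Pnew ℓ).PosDef)
    (θ : ℝ) (hθ : 1 ≤ θ)
    (hdrift : ∀ ℓ, (θ • (Pnew ℓ)⁻¹ - (Pold ℓ)⁻¹).PosSemidef)
    (Q : Fin N → Matrix (Fin n) (Fin n) ℝ)
    (hQ : ∀ j, (Q j).PosSemidef ∧
      ∃ β : Fin N → ℝ, (∀ ℓ, β ℓ ∈ Set.Icc (0 : ℝ) 1) ∧ (∑ ℓ, β ℓ) ≤ 1 ∧
        ((∑ ℓ, β ℓ • (Pold ℓ)⁻¹) - Q j).PosSemidef)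
    (i : Fin N) (𝒩 : Finset (Fin N)) (hi : i ∈ 𝒩)
    (lP : ℝ) (l : Fin N → ℝ)
    (hlP : lP ∈ Set.Icc (0 : ℝ) 1) (hl : ∀ j ∈ 𝒩, l j ∈ Set.Icc (0 : ℝ) 1)
    (hsum : lP + ∑ j ∈ 𝒩, l j ≤ 1)
    (Q' : Matrix (Fin n) (Fin n) ℝ) (hQ'psd : Q'.PosSemidef)
    (hQ'le : ((lP • (Pnew i)⁻¹ + θ⁻¹ • ∑ j ∈ 𝒩, l j • Q j) - Q').PosSemidef) :
    Q'.PosSemidef ∧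
      ∃ μ : Fin N → ℝ, (∀ ℓ, μ ℓ ∈ Set.Icc (0 : ℝ) 1) ∧ (∑ ℓ, μ ℓ) ≤ 1 ∧
        ((∑ ℓ, μ ℓ • (Pnew ℓ)⁻¹) - Q').PosSemidef :=
  stmt6_general Pold Pnew θ hθ hdrift Q hQ i 𝒩 lP l hlP hl hsum Q' hQ'psd hQ'le
end

section
/- Suppose p̲·I ⪯ Pᵢ[k] for all i and k with p̲ > 0, θ̄ ≥ 1, and Qᵢ[k] = λ_P Pᵢ[k]⁻¹ + (1/θ̄) Σ_{j∈𝒩ᵢ} λⱼ Qⱼ[k−1] for coefficients λ_P, λⱼ ∈ [0,1] with λ_P + Σⱼ λⱼ ≤ 1 (possibly depending on i and k), with initialization Qᵢ[0] = Pᵢ[0]⁻¹. Then Qᵢ[k] ⪯ (1/p̲)·I for all i and all k ≥ 0. -/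
/-!
Since `p • 1 ≤ P`, the spectrum of `P` lies in `[p, ∞)`, so through the functional calculus
`P⁻¹ = cfc (·⁻¹) P ≤ p⁻¹ • 1`. By induction on `k`, each `Q (k + 1) i` is a combination of
`P⁻¹` and the `Q k j` with nonnegative weights `lP`, `θ⁻¹ * l` of total mass at most one. Since
`p⁻¹ • 1 ≥ 0`, such a combination of matrices below `p⁻¹ • 1` stays below it.
-/

open scoped MatrixOrder

theorem smul_add_sum_smul_le {𝕜 M ι : Type*} [Semiring 𝕜] [PartialOrder 𝕜] [AddCommMonoid M]
    [PartialOrder M] [IsOrderedAddMonoid M] [Module 𝕜 M] [PosSMulMono 𝕜 M] [SMulPosMono 𝕜 M]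
    {s : Finset ι} {a : 𝕜} {w : ι → 𝕜} {x b : M} {f : ι → M}
    (ha : 0 ≤ a) (hw : ∀ i ∈ s, 0 ≤ w i) (hsum : a + ∑ i ∈ s, w i ≤ 1)
    (hx : x ≤ b) (hf : ∀ i ∈ s, f i ≤ b) (hb : 0 ≤ b) :
    a • x + ∑ i ∈ s, w i • f i ≤ b :=
  calc a • x + ∑ i ∈ s, w i • f i ≤ a • b + ∑ i ∈ s, w i • b :=
        add_le_add (smul_le_smul_of_nonneg_left hx ha)
          (Finset.sum_le_sum fun i hi ↦ smul_le_smul_of_nonneg_left (hf i hi) (hw i hi))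
    _ = (a + ∑ i ∈ s, w i) • b := by rw [add_smul, Finset.sum_smul]
    _ ≤ (1 : 𝕜) • b := smul_le_smul_of_nonneg_right hsum hb
    _ = b := one_smul 𝕜 b

theorem Matrix.inv_le_smul_one_of_smul_one_le {n : Type*} [Fintype n] [DecidableEq n]
    {A : Matrix n n ℝ} {p : ℝ} (hp : 0 < p) (h : p • 1 ≤ A) : A⁻¹ ≤ p⁻¹ • 1 := by
  have hA : IsSelfAdjoint A :=
    IsSelfAdjoint.of_nonneg ((smul_nonneg hp.le zero_le_one).trans h)
  have hspec : ∀ x ∈ spectrum ℝ A, p ≤ x := by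
    rw [← algebraMap_le_iff_le_spectrum hA, Algebra.algebraMap_eq_smul_one]
    exact h
  have hunit : IsUnit A := by
    by_contra hA0
    exact hp.not_ge (hspec 0 (spectrum.zero_mem_iff ℝ |>.mpr hA0))
  rw [Matrix.nonsing_inv_eq_ringInverse, ← cfc_ringInverse_id (R := ℝ) A hunit hA,
    ← Algebra.algebraMap_eq_smul_one]
  exact cfc_le_algebraMap _ _ _ (fun x hx ↦ inv_anti₀ hp (hspec x hx))
    (continuousOn_inv₀.mono fun x hx ↦ (hp.trans_le (hspec x hx)).ne')

theorem stmt8_general {n N : ℕ} (P : ℕ → Fin N → Matrix (Fin n) (Fin n) ℝ)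
    (p θ : ℝ) (hp : 0 < p) (hθ : 1 ≤ θ)
    (hPbound : ∀ k i, ((P k i) - p • (1 : Matrix (Fin n) (Fin n) ℝ)).PosSemidef)
    (𝒩 : Fin N → Finset (Fin N))
    (lP : ℕ → Fin N → ℝ) (l : ℕ → Fin N → Fin N → ℝ)
    (hlP : ∀ k i, lP k i ∈ Set.Icc (0 : ℝ) 1)
    (hl : ∀ k i j, l k i j ∈ Set.Icc (0 : ℝ) 1)
    (hsum : ∀ k i, lP k i + ∑ j ∈ 𝒩 i, l k i j ≤ 1)
    (Q : ℕ → Fin N → Matrix (Fin n) (Fin n) ℝ)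
    (hQ0 : ∀ i, Q 0 i = (P 0 i)⁻¹)
    (hQrec : ∀ k i, Q (k + 1) i =
      lP (k + 1) i • (P (k + 1) i)⁻¹ + θ⁻¹ • ∑ j ∈ 𝒩 i, l (k + 1) i j • Q k j) :
    ∀ k i, (p⁻¹ • (1 : Matrix (Fin n) (Fin n) ℝ) - Q k i).PosSemidef := by
  have hPinv k i : (P k i)⁻¹ ≤ p⁻¹ • 1 :=
    Matrix.inv_le_smul_one_of_smul_one_le hp (hPbound k i)
  have hθinv : θ⁻¹ ∈ Set.Icc (0 : ℝ) 1 := ⟨by positivity, inv_le_one_of_one_le₀ hθ⟩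
  intro k
  induction k with
  | zero => exact fun i ↦ hQ0 i ▸ hPinv 0 i
  | succ k ih =>
    intro i
    have hweights : lP (k + 1) i + ∑ j ∈ 𝒩 i, θ⁻¹ * l (k + 1) i j ≤ 1 := by
      have hl_nonneg : 0 ≤ ∑ j ∈ 𝒩 i, l (k + 1) i j :=
        Finset.sum_nonneg fun j _ ↦ (hl (k + 1) i j).1
      rw [← Finset.mul_sum]
      nlinarith [hsum (k + 1) i, hθinv.2]
    rw [← Matrix.le_iff, hQrec, Finset.smul_sum]
    simp only [smul_smul]
    exact smul_add_sum_smul_le (hlP (k + 1) i).1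
      (fun j _ ↦ mul_nonneg hθinv.1 (hl (k + 1) i j).1) hweights (hPinv (k + 1) i)
      (fun j _ ↦ ih j) (smul_nonneg (inv_nonneg.2 hp.le) zero_le_one)

/-- boundedness of the iterates. If `p̲ I ⪯ Pᵢ[k]` for all `i, k` with
`p̲ > 0`, `θ̄ ≥ 1`, the iterates satisfy the sub-convex recursion
`Qᵢ[k] = λ_P Pᵢ[k]⁻¹ + (1/θ̄) Σ_{j∈𝒩ᵢ} λⱼ Qⱼ[k−1]` with `λ_P, λⱼ ∈ [0,1]`,
`λ_P + Σⱼ λⱼ ≤ 1` (coefficients possibly depending on `i` and `k`), and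
`Qᵢ[0] = Pᵢ[0]⁻¹`, then `Qᵢ[k] ⪯ (1/p̲) I` for all `i` and all `k ≥ 0`. -/
theorem stmt8 {n N : ℕ} (P : ℕ → Fin N → Matrix (Fin n) (Fin n) ℝ)
    (hP : ∀ k i, (P k i).PosDef)
    (p θ : ℝ) (hp : 0 < p) (hθ : 1 ≤ θ)
    (hPbound : ∀ k i, ((P k i) - p • (1 : Matrix (Fin n) (Fin n) ℝ)).PosSemidef)
    (𝒩 : Fin N → Finset (Fin N))
    (lP : ℕ → Fin N → ℝ) (l : ℕ → Fin N → Fin N → ℝ)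
    (hlP : ∀ k i, lP k i ∈ Set.Icc (0 : ℝ) 1)
    (hl : ∀ k i j, l k i j ∈ Set.Icc (0 : ℝ) 1)
    (hsum : ∀ k i, lP k i + ∑ j ∈ 𝒩 i, l k i j ≤ 1)
    (Q : ℕ → Fin N → Matrix (Fin n) (Fin n) ℝ)
    (hQ0 : ∀ i, Q 0 i = (P 0 i)⁻¹)
    (hQrec : ∀ k i, Q (k + 1) i =
      lP (k + 1) i • (P (k + 1) i)⁻¹ + θ⁻¹ • ∑ j ∈ 𝒩 i, l (k + 1) i j • Q k j) :
    ∀ k i, (p⁻¹ • (1 : Matrix (Fin n) (Fin n) ℝ) - Q k i).PosSemidef :=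
  stmt8_general P p θ hp hθ hPbound 𝒩 lP l hlP hl hsum Q hQ0 hQrec
end
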